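/- Let (s,u) be a regular point of the GNR-surface F, i.e. u²·f(s)² + g(s,u)² ≠ 0, and let U(s,u) = (∂F/∂s × ∂F/∂u)/‖∂F/∂s × ∂F/∂u‖ be the unit surface normal. Then the second fundamental coefficients satisfy M := ⟨∂²F/∂s∂u(s,u), U(s,u)⟩ = −f(s)/√(u²·f(s)² + g(s,u)²) and N₂ := ⟨∂²F/∂u²(s,u), U(s,u)⟩ = 0. -/

import Mathlib

open Matrix
open scoped Matrix

lemma my_bac_cab (a b c : Fin 3 → ℝ) :
    a ⨯₃ (b ⨯₃ c) = (a ⬝ᵥ c) • b - (a ⬝ᵥ b) • c := by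
  ext i
  fin_cases i <;>
    simp [cross_apply, dotProduct, Fin.sum_univ_three] <;> ring

theorem stmt_9
    (α T N B : ℝ → Fin 3 → ℝ) (κ τ a₁ a₂ : ℝ → ℝ)
    (hαs : ContDiff ℝ (⊤ : ℕ∞) α) (hTs : ContDiff ℝ (⊤ : ℕ∞) T) (hNs : ContDiff ℝ (⊤ : ℕ∞) N)
    (hBs : ContDiff ℝ (⊤ : ℕ∞) B) (hκs : ContDiff ℝ (⊤ : ℕ∞) κ) (hτs : ContDiff ℝ (⊤ : ℕ∞) τ)
    (ha₁s : ContDiff ℝ (⊤ : ℕ∞) a₁) (ha₂s : ContDiff ℝ (⊤ : ℕ∞) a₂)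
    (hαT : ∀ s, T s = deriv α s)
    (hTT : ∀ s, T s ⬝ᵥ T s = 1) (hNN : ∀ s, N s ⬝ᵥ N s = 1) (hBB : ∀ s, B s ⬝ᵥ B s = 1)
    (hTN : ∀ s, T s ⬝ᵥ N s = 0) (hTB : ∀ s, T s ⬝ᵥ B s = 0) (hNB : ∀ s, N s ⬝ᵥ B s = 0)
    (hBTN : ∀ s, B s = T s ⨯₃ N s)
    (hT' : ∀ s, deriv T s = κ s • N s)
    (hN' : ∀ s, deriv N s = (-κ s) • T s + τ s • B s)
    (hB' : ∀ s, deriv B s = (-τ s) • N s)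
    (hcircle : ∀ s, a₁ s ^ 2 + a₂ s ^ 2 = 1)
    (q_n : ℝ → Fin 3 → ℝ) (hq : ∀ s, q_n s = a₁ s • N s + a₂ s • B s)
    (F : ℝ → ℝ → Fin 3 → ℝ) (hF : ∀ s u, F s u = α s + u • q_n s)
    (f : ℝ → ℝ) (hf : ∀ s, f s = deriv a₁ s * a₂ s - a₁ s * deriv a₂ s - τ s)
    (g : ℝ → ℝ → ℝ) (hg : ∀ s u, g s u = 1 - u * a₁ s * κ s)
    (s u : ℝ) (hreg : u ^ 2 * f s ^ 2 + g s u ^ 2 ≠ 0)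
    (U : Fin 3 → ℝ)
    (hU : U = (Real.sqrt ((deriv (fun t => F t u) s ⨯₃ deriv (F s) u) ⬝ᵥ (deriv (fun t => F t u) s ⨯₃ deriv (F s) u)))⁻¹ • (deriv (fun t => F t u) s ⨯₃ deriv (F s) u)) :
    deriv (fun t => deriv (F t) u) s ⬝ᵥ U = -f s / Real.sqrt (u ^ 2 * f s ^ 2 + g s u ^ 2)
      ∧ deriv (deriv (F s)) u ⬝ᵥ U = 0 := by
  -- u-derivatives
  have h1 : ∀ t v, HasDerivAt (F t) (q_n t) v := by
    intro t v
    have : F t = fun w : ℝ => α t + w • q_n t := funext (hF t)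
    rw [this]
    simpa using ((hasDerivAt_id v).smul_const (q_n t)).const_add (α t)
  have hFu : deriv (F s) u = q_n s := (h1 s u).deriv
  have hFuu : deriv (deriv (F s)) u = 0 := by
    have h2 : deriv (F s) = fun _ : ℝ => q_n s := funext fun v => (h1 s v).deriv
    rw [h2]; simp
  -- s-derivative of q_n
  have hq' : HasDerivAt q_n (a₁ s • deriv N s + deriv a₁ s • N s
      + (a₂ s • deriv B s + deriv a₂ s • B s)) s := by
    have : q_n = fun t => a₁ t • N t + a₂ t • B t := funext hq
    rw [this]
    exact (((ha₁s.differentiable (by simp) s).hasDerivAt).smul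
        ((hNs.differentiable (by simp) s).hasDerivAt)).add
      (((ha₂s.differentiable (by simp) s).hasDerivAt).smul
        ((hBs.differentiable (by simp) s).hasDerivAt))
  -- the mixed partial
  have hFsu : deriv (fun t => deriv (F t) u) s
      = a₁ s • deriv N s + deriv a₁ s • N s + (a₂ s • deriv B s + deriv a₂ s • B s) := by
    have : (fun t => deriv (F t) u) = q_n := funext fun t => (h1 t u).deriv
    rw [this, hq'.deriv]
  -- the s partial
  have hFs : deriv (fun t => F t u) s = deriv α s
      + u • (a₁ s • deriv N s + deriv a₁ s • N s + (a₂ s • deriv B s + deriv a₂ s • B s)) := by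
    have : (fun t => F t u) = fun t => α t + u • q_n t := funext fun t => hF t u
    rw [this]
    exact (((hαs.differentiable (by simp) s).hasDerivAt).add (hq'.const_smul u)).deriv
  -- base cross products
  have hTNc : T s ⨯₃ N s = B s := (hBTN s).symm
  have hNTc : N s ⨯₃ T s = -B s := by rw [← cross_anticomm, hTNc]
  have hNBc : N s ⨯₃ B s = T s := by
    rw [hBTN s, my_bac_cab, hNN s, dotProduct_comm, hTN s]; simp
  have hBNc : B s ⨯₃ N s = -T s := by rw [← cross_anticomm, hNBc]
  have hTBc : T s ⨯₃ B s = -N s := by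
    rw [hBTN s, my_bac_cab, hTN s, hTT s]; simp
  have hBTc : B s ⨯₃ T s = N s := by rw [← cross_anticomm, hTBc]; simp
  -- dot comms
  have hNT : N s ⬝ᵥ T s = 0 := by rw [dotProduct_comm]; exact hTN s
  have hBT : B s ⬝ᵥ T s = 0 := by rw [dotProduct_comm]; exact hTB s
  have hBN : B s ⬝ᵥ N s = 0 := by rw [dotProduct_comm]; exact hNB s
  -- the cross product vector
  have hfs : f s = deriv a₁ s * a₂ s - a₁ s * deriv a₂ s
      - τ s * (a₁ s ^ 2 + a₂ s ^ 2) := by rw [hf s, hcircle s]; ring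
  set V := deriv (fun t => F t u) s ⨯₃ deriv (F s) u with hVdef
  have hV : V = (u * f s) • T s + (-(g s u * a₂ s)) • N s + (g s u * a₁ s) • B s := by
    rw [hVdef, hFs, hFu, hq s, ← hαT s, hN' s, hB' s, hfs, hg s u]
    simp only [smul_add, smul_smul, map_add, _root_.map_smul, LinearMap.add_apply,
      LinearMap.smul_apply, hTNc, hNTc, hNBc, hBNc, hTBc, hBTc, cross_self,
      smul_zero, add_zero, zero_add, smul_neg]
    module
  have hVV : V ⬝ᵥ V = u ^ 2 * f s ^ 2 + g s u ^ 2 := by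
    rw [hV]
    simp only [add_dotProduct, dotProduct_add, smul_dotProduct, dotProduct_smul,
      hTT s, hNN s, hBB s, hTN s, hTB s, hNB s, hNT, hBT, hBN,
      smul_eq_mul, mul_one, mul_zero, add_zero, zero_add]
    linear_combination (g s u ^ 2) * hcircle s
  have hW : (a₁ s • deriv N s + deriv a₁ s • N s + (a₂ s • deriv B s + deriv a₂ s • B s)) ⬝ᵥ V
      = -f s := by
    rw [hV, hN' s, hB' s, hf s, hg s u]
    simp only [smul_add, smul_smul, add_dotProduct, dotProduct_add, smul_dotProduct,
      dotProduct_smul, hTT s, hNN s, hBB s, hTN s, hTB s, hNB s, hNT, hBT, hBN,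
      smul_eq_mul, mul_one, mul_zero, add_zero, zero_add]
    linear_combination ((1 - u * a₁ s * κ s) * τ s) * hcircle s
  have hpos : 0 < u ^ 2 * f s ^ 2 + g s u ^ 2 :=
    lt_of_le_of_ne (by positivity) (Ne.symm hreg)
  have hsqrt : 0 < Real.sqrt (u ^ 2 * f s ^ 2 + g s u ^ 2) := Real.sqrt_pos.mpr hpos
  constructor
  · rw [hFsu, hU, hVV, dotProduct_smul, hW, smul_eq_mul]
    rw [inv_mul_eq_div]
  · rw [hFuu, zero_dotProduct]
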